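/- (Proposition 1) For every integer n ≥ 2, the number a(n) = a_{1,1}(n) of permutations π of {1,…,n} such that π_{i+1} − π_i ≠ 1 for all 1 ≤ i ≤ n−1 satisfies a(n) = (n−1)·a(n−1) + (n−2)·a(n−2). -/

import Mathlib

/-!
Read a permutation as a word and delete its largest letter `n`. If the remaining word has no rise,
`n` can be put back into any of its `n` gaps except the one right after `n - 1`. Otherwise deleting
`n` created exactly one rise: the word was `… x n (x+1) …`. Merging `x` and `x + 1` into one letter
and closing the gap in the values leaves a word of length `n - 2` without rises together with the
letter `x`, one of `n - 2` choices, and `n` and `x + 1` can be put back in only one way.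
-/

/-- The set of permutations `π` of `{0,…,n-1}` (equivalently `{1,…,n}`) such that
`π (i+1) - π i ≠ 1` for all valid indices `i`.  For `n = 0` this has exactly one
element (the empty permutation). -/
def noRise (n : ℕ) : Finset (Equiv.Perm (Fin n)) :=
  Finset.univ.filter fun π =>
    ∀ i j : Fin n, (j : ℕ) = (i : ℕ) + 1 →
      ((π j : ℕ) : ℤ) - ((π i : ℕ) : ℤ) ≠ 1

open List

namespace List

variable {α : Type*} {t d : List α}

theorem append_cons_cons_cons_perm {x v w : α} :
    t ++ x :: v :: w :: d ~ v :: w :: (t ++ x :: d) := by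
  simpa using (perm_middle (a := v) (l₁ := t ++ [x]) (l₂ := w :: d)).trans
    ((perm_middle (a := w) (l₁ := t ++ [x]) (l₂ := d)).cons v)

variable [BEq α] [LawfulBEq α] {a : α}

theorem erase_append_cons_self (h : a ∉ t) : (t ++ a :: d).erase a = t ++ d := by
  rw [erase_append_right _ h, erase_cons_head]

theorem idxOf_append_cons_self (h : a ∉ t) : (t ++ a :: d).idxOf a = t.length := by
  rw [idxOf_append_of_notMem h, idxOf_cons_self, Nat.add_zero]

theorem Nodup.getLast?_take_eq_some_iff {l : List α} (hl : l.Nodup) (ha : a ∈ l) {k : ℕ}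
    (hk : k ≤ l.length) : (l.take k).getLast? = some a ↔ k = l.idxOf a + 1 := by
  rcases k with _ | k
  · simp
  · have hk' : k < l.length := hk
    rw [getLast?_take, if_neg k.succ_ne_zero, Nat.add_sub_cancel, getElem?_eq_getElem hk',
      Option.some_or, Option.some.injEq, add_left_inj]
    constructor
    · rintro rfl; exact (hl.idxOf_getElem k hk').symm
    · rintro rfl; exact getElem_idxOf _

theorem perm_range_iff {l : List ℕ} {n : ℕ} : l ~ range n ↔ l.Nodup ∧ ∀ a, a ∈ l ↔ a < n := by
  constructor
  · intro h
    exact ⟨h.nodup_iff.2 nodup_range, fun a => by simp [h.mem_iff]⟩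
  · rintro ⟨hl, hmem⟩
    exact (perm_ext_iff_of_nodup hl nodup_range).2 fun a => by simp [hmem]

theorem append_cons_perm_range_succ_iff {t d : List ℕ} {n : ℕ} :
    t ++ n :: d ~ range (n + 1) ↔ t ++ d ~ range n := by
  rw [perm_middle.congr_left, range_succ, (perm_append_singleton _ _).congr_right, perm_cons]

end List

namespace NoRise

def RiseFree (l : List ℕ) : Prop := l.IsChain fun a b => b ≠ a + 1

instance : DecidablePred RiseFree := fun l => inferInstanceAs (Decidable (l.IsChain _))

variable {n m x : ℕ} {l t d : List ℕ}

theorem riseFree_append_cons {v : ℕ} :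
    RiseFree (t ++ v :: d) ↔
      RiseFree t ∧ RiseFree d ∧ (∀ a ∈ t.getLast?, v ≠ a + 1) ∧ ∀ b ∈ d.head?, b ≠ v + 1 := by
  simp only [RiseFree, isChain_append, isChain_cons, head?_cons, Option.mem_def,
    Option.some.injEq, forall_eq']
  tauto

theorem riseFree_append_cons_succ_iff (hd : ∀ b ∈ d, b ≤ n) :
    RiseFree (t ++ (n + 1) :: d) ↔ RiseFree t ∧ RiseFree d ∧ t.getLast? ≠ some n := by
  have hhead : ∀ b ∈ d.head?, b ≠ n + 1 + 1 := fun b hb => by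
    have := hd b (mem_of_mem_head? hb); omega
  have hlast : (∀ a ∈ t.getLast?, n + 1 ≠ a + 1) ↔ t.getLast? ≠ some n := by
    simp only [Option.mem_def, ne_eq, Nat.add_right_cancel_iff]
    exact ⟨fun h hn => h n hn rfl, fun h a ha hna => h (hna ▸ ha)⟩
  rw [riseFree_append_cons, hlast]
  tauto

def noRiseLists (n : ℕ) : Finset (List ℕ) := (range n).permutations.toFinset.filter RiseFree

theorem mem_noRiseLists : l ∈ noRiseLists n ↔ l ~ range n ∧ RiseFree l := by
  simp [noRiseLists, mem_permutations]

theorem nodup_of_mem_noRiseLists (hl : l ∈ noRiseLists n) : l.Nodup :=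
  (perm_range_iff.1 (mem_noRiseLists.1 hl).1).1

theorem mem_iff_lt_of_mem_noRiseLists (hl : l ∈ noRiseLists n) {a : ℕ} : a ∈ l ↔ a < n :=
  (perm_range_iff.1 (mem_noRiseLists.1 hl).1).2 a

theorem length_of_mem_noRiseLists (hl : l ∈ noRiseLists n) : l.length = n := by
  simpa using (mem_noRiseLists.1 hl).1.length_eq

theorem exists_eq_append_cons_of_mem_noRiseLists (hl : l ∈ noRiseLists n) {a : ℕ} (ha : a < n) :
    ∃ t d, l = t ++ a :: d ∧ a ∉ t ∧ a ∉ d := by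
  obtain ⟨t, d, rfl⟩ := append_of_mem ((mem_iff_lt_of_mem_noRiseLists hl).2 ha)
  have := nodup_middle.1 (nodup_of_mem_noRiseLists hl)
  simp only [nodup_cons, mem_append, not_or] at this
  exact ⟨t, d, rfl, this.1⟩

theorem exists_eq_append_max_cons (hl : l ∈ noRiseLists (m + 2)) :
    ∃ t d, l = t ++ (m + 1) :: d ∧ m + 1 ∉ t ∧ ∀ b ∈ d, b ≤ m := by
  obtain ⟨t, d, rfl, ht, hd⟩ :=
    exists_eq_append_cons_of_mem_noRiseLists hl (a := m + 1) (by omega)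
  refine ⟨t, d, rfl, ht, fun b hb => ?_⟩
  have := (mem_iff_lt_of_mem_noRiseLists hl (a := b)).1 (by simp [hb])
  have := ne_of_mem_of_not_mem hb hd
  omega

theorem append_cons_mem_noRiseLists_iff (hd : ∀ b ∈ d, b ≤ m) :
    t ++ (m + 1) :: d ∈ noRiseLists (m + 2) ↔
      t ++ d ~ range (m + 1) ∧ RiseFree t ∧ RiseFree d ∧ t.getLast? ≠ some m := by
  rw [mem_noRiseLists, append_cons_perm_range_succ_iff, riseFree_append_cons_succ_iff hd]

theorem getLast?_take_eq_some_iff_of_mem_noRiseLists (hl : l ∈ noRiseLists (m + 1)) {k : ℕ}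
    (hk : k ≤ m + 1) : (l.take k).getLast? = some m ↔ k = l.idxOf m + 1 :=
  (nodup_of_mem_noRiseLists hl).getLast?_take_eq_some_iff
    ((mem_iff_lt_of_mem_noRiseLists hl).2 m.lt_succ_self) (by rwa [length_of_mem_noRiseLists hl])

theorem take_append_cons_drop_mem_noRiseLists (hl : l ∈ noRiseLists (m + 1)) {k : ℕ}
    (hk : k ≤ m + 1) (hk' : k ≠ l.idxOf m + 1) :
    l.take k ++ (m + 1) :: l.drop k ∈ noRiseLists (m + 2) := by
  obtain ⟨hperm, hrise⟩ := mem_noRiseLists.1 hl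
  have hle : ∀ b ∈ l.drop k, b ≤ m := fun b hb =>
    Nat.lt_succ_iff.1 ((mem_iff_lt_of_mem_noRiseLists hl).1 (mem_of_mem_drop hb))
  rw [append_cons_mem_noRiseLists_iff hle, take_append_drop, ne_eq,
    getLast?_take_eq_some_iff_of_mem_noRiseLists hl hk]
  exact ⟨hperm, hrise.take k, hrise.drop k, hk'⟩

theorem length_ne_idxOf_add_one (hl : t ++ (m + 1) :: d ∈ noRiseLists (m + 2))
    (hd : ∀ b ∈ d, b ≤ m) (htd : t ++ d ∈ noRiseLists (m + 1)) :
    t.length ≠ (t ++ d).idxOf m + 1 := by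
  have hlen := length_of_mem_noRiseLists htd
  rw [length_append] at hlen
  rw [ne_eq, ← getLast?_take_eq_some_iff_of_mem_noRiseLists htd (by omega), take_left]
  exact ((append_cons_mem_noRiseLists_iff hd).1 hl).2.2.2

theorem succ_notMem_take_of_mem_noRiseLists (hl : l ∈ noRiseLists (m + 1)) (k : ℕ) :
    m + 1 ∉ l.take k := fun h =>
  lt_irrefl _ ((mem_iff_lt_of_mem_noRiseLists hl).1 (mem_of_mem_take h))

theorem card_filter_riseFree_erase (m : ℕ) :
    ((noRiseLists (m + 2)).filter fun l => RiseFree (l.erase (m + 1))).card =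
      (m + 1) * (noRiseLists (m + 1)).card := by
  -- a rise-free word of length `m + 1` and a gap for `m + 1` other than the one right after `m`
  calc _ = ((noRiseLists (m + 1)).sigma fun l =>
          (Finset.range (m + 2)).erase (l.idxOf m + 1)).card := by
        refine Finset.card_nbij' (fun l => ⟨l.erase (m + 1), l.idxOf (m + 1)⟩)
          (fun p => p.1.take p.2 ++ (m + 1) :: p.1.drop p.2) ?_ ?_ ?_ ?_
        · intro l hl
          obtain ⟨hl, herase⟩ := Finset.mem_filter.1 hl
          obtain ⟨t, d, rfl, ht, hd⟩ := exists_eq_append_max_cons hl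
          rw [erase_append_cons_self ht] at herase
          have htd : t ++ d ∈ noRiseLists (m + 1) :=
            mem_noRiseLists.2 ⟨((append_cons_mem_noRiseLists_iff hd).1 hl).1, herase⟩
          have hlen := length_of_mem_noRiseLists hl
          simp only [length_append, length_cons] at hlen
          simp only [Finset.coe_sigma, Set.mem_sigma_iff, Finset.mem_coe, Finset.mem_erase,
            Finset.mem_range, erase_append_cons_self ht, idxOf_append_cons_self ht]
          exact ⟨htd, length_ne_idxOf_add_one hl hd htd, by omega⟩
        · rintro ⟨l, k⟩ hp
          obtain ⟨hl, hkm, hk⟩ : l ∈ noRiseLists (m + 1) ∧ k < m + 2 ∧ k ≠ l.idxOf m + 1 := by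
            simpa using hp
          dsimp only
          rw [Finset.mem_coe, Finset.mem_filter,
            erase_append_cons_self (succ_notMem_take_of_mem_noRiseLists hl k), take_append_drop]
          exact ⟨take_append_cons_drop_mem_noRiseLists hl (by omega) hk, (mem_noRiseLists.1 hl).2⟩
        · intro l hl
          obtain ⟨t, d, rfl, ht, -⟩ := exists_eq_append_max_cons (Finset.mem_filter.1 hl).1
          dsimp only
          rw [erase_append_cons_self ht, idxOf_append_cons_self ht, take_left, drop_left]
        · rintro ⟨l, k⟩ hp
          obtain ⟨hl, hkm, -⟩ : l ∈ noRiseLists (m + 1) ∧ k < m + 2 ∧ k ≠ l.idxOf m + 1 := by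
            simpa using hp
          have htake := succ_notMem_take_of_mem_noRiseLists hl k
          dsimp only
          rw [erase_append_cons_self htake, take_append_drop, idxOf_append_cons_self htake,
            length_take, length_of_mem_noRiseLists hl, min_eq_left (by omega)]
    _ = (m + 1) * (noRiseLists (m + 1)).card := by
        rw [Finset.card_sigma, Finset.sum_const_nat fun l hl => ?_, mul_comm]
        have hm := idxOf_lt_length_of_mem ((mem_iff_lt_of_mem_noRiseLists hl).2 m.lt_succ_self)
        rw [length_of_mem_noRiseLists hl] at hm
        rw [Finset.card_erase_of_mem (by simpa using hm), Finset.card_range]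
        omega

/- `shiftUp x` is the increasing bijection from `ℕ` onto `ℕ \ {x + 1}`; `shiftDown x` is its left
inverse, which merges `x + 1` into `x`. -/
def shiftUp (x u : ℕ) : ℕ := if u ≤ x then u else u + 1

def shiftDown (x u : ℕ) : ℕ := if u ≤ x then u else u - 1

@[simp] theorem shiftUp_self : shiftUp x x = x := if_pos le_rfl

@[simp] theorem shiftDown_self : shiftDown x x = x := if_pos le_rfl

@[simp] theorem shiftDown_shiftUp (u : ℕ) : shiftDown x (shiftUp x u) = u := by
  unfold shiftUp shiftDown; split_ifs <;> omega

theorem shiftUp_shiftDown {u : ℕ} (h : u ≠ x + 1) : shiftUp x (shiftDown x u) = u := by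
  unfold shiftUp shiftDown; split_ifs <;> omega

theorem shiftUp_ne_succ (u : ℕ) : shiftUp x u ≠ x + 1 := by
  unfold shiftUp; split_ifs <;> omega

theorem map_shiftUp_map_shiftDown (h : x + 1 ∉ l) : (l.map (shiftDown x)).map (shiftUp x) = l := by
  rw [map_map]
  exact (map_congr_left fun u hu => shiftUp_shiftDown (ne_of_mem_of_not_mem hu h)).trans (map_id l)

theorem notMem_map_shiftDown (h : x ∉ l) (h' : x + 1 ∉ l) : x ∉ l.map (shiftDown x) := by
  simp only [mem_map, not_exists, not_and]
  intro u hu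
  have := ne_of_mem_of_not_mem hu h
  have := ne_of_mem_of_not_mem hu h'
  unfold shiftDown; split_ifs <;> omega

theorem RiseFree.map_shiftUp (h : RiseFree l) : RiseFree (l.map (shiftUp x)) :=
  (isChain_map _).2 <| h.imp fun a b hab => by unfold shiftUp; split_ifs <;> omega

theorem RiseFree.map_shiftDown (h : RiseFree l) (hx : x ∉ l) (hx' : x + 1 ∉ l) :
    RiseFree (l.map (shiftDown x)) := by
  refine (isChain_map _).2 <| (IsChain.iff_mem.1 h).imp fun a b ⟨ha, hb, hab⟩ => ?_
  have := ne_of_mem_of_not_mem ha hx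
  have := ne_of_mem_of_not_mem hb hx'
  unfold shiftDown; split_ifs <;> omega

theorem range_perm_cons_cons_map_shiftUp (hx : x < m) :
    range (m + 2) ~ (m + 1) :: (x + 1) :: (range m).map (shiftUp x) := by
  refine (perm_range_iff.2 ⟨?_, fun a => ?_⟩).symm
  · have hinj : (shiftUp x).Injective :=
      Function.LeftInverse.injective (g := shiftDown x) shiftDown_shiftUp
    simp only [nodup_cons, mem_cons, mem_map, mem_range, not_or, not_exists, not_and]
    refine ⟨⟨by omega, fun u hu h => ?_⟩, fun u _ => shiftUp_ne_succ u, nodup_range.map hinj⟩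
    unfold shiftUp at h; split_ifs at h <;> omega
  · simp only [mem_cons, mem_map, mem_range]
    constructor
    · rintro (rfl | rfl | ⟨u, hu, rfl⟩)
      · omega
      · omega
      · unfold shiftUp; split_ifs <;> omega
    · intro ha
      rcases eq_or_ne a (m + 1) with rfl | h1
      · exact Or.inl rfl
      rcases eq_or_ne a (x + 1) with rfl | h2
      · exact Or.inr (Or.inl rfl)
      refine Or.inr (Or.inr ⟨shiftDown x a, ?_, shiftUp_shiftDown h2⟩)
      unfold shiftDown; split_ifs <;> omega

theorem cons_cons_perm_range_iff {L : List ℕ} (hx : x < m) (hL : x + 1 ∉ L) :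
    (m + 1) :: (x + 1) :: L ~ range (m + 2) ↔ L.map (shiftDown x) ~ range m := by
  rw [(range_perm_cons_cons_map_shiftUp hx).congr_right, perm_cons, perm_cons]
  constructor
  · intro h
    simpa [map_map, Function.comp_def] using h.map (shiftDown x)
  · intro h
    rw [← map_shiftUp_map_shiftDown hL]
    exact h.map _

def contract (m : ℕ) (l : List ℕ) : List ℕ × ℕ :=
  let x := l.getD (l.idxOf (m + 1) - 1) 0
  (((l.erase (m + 1)).erase (x + 1)).map (shiftDown x), x)

def expand (m : ℕ) (p : List ℕ × ℕ) : List ℕ :=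
  p.1.flatMap fun u => if u = p.2 then [u, m + 1, u + 1] else [shiftUp p.2 u]

theorem contract_append (hx : x < m) (ht : m + 1 ∉ t) (ht' : x + 1 ∉ t) :
    contract m (t ++ x :: (m + 1) :: (x + 1) :: d) = ((t ++ x :: d).map (shiftDown x), x) := by
  have hsplit : t ++ x :: (m + 1) :: (x + 1) :: d = (t ++ [x]) ++ (m + 1) :: (x + 1) :: d := by simp
  have ht₁ : m + 1 ∉ t ++ [x] := by simp [ht]; omega
  have ht₂ : x + 1 ∉ t ++ [x] := by simp [ht']
  have hpred : (t ++ x :: (m + 1) :: (x + 1) :: d).getD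
      ((t ++ x :: (m + 1) :: (x + 1) :: d).idxOf (m + 1) - 1) 0 = x := by
    rw [hsplit, idxOf_append_cons_self ht₁, ← hsplit]
    simp
  rw [contract, hpred, hsplit, erase_append_cons_self ht₁, erase_append_cons_self ht₂]
  simp

theorem expand_append {s e : List ℕ} (hs : x ∉ s) (he : x ∉ e) :
    expand m (s ++ x :: e, x) =
      s.map (shiftUp x) ++ x :: (m + 1) :: (x + 1) :: e.map (shiftUp x) := by
  have hmap : ∀ r : List ℕ, x ∉ r →
      (r.flatMap fun u => if u = x then [u, m + 1, u + 1] else [shiftUp x u]) = r.map (shiftUp x) :=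
    fun r hr => by
      rw [map_eq_flatMap]
      exact flatMap_congr fun u hu => if_neg (ne_of_mem_of_not_mem hu hr)
  simp [expand, hmap s hs, hmap e he]

theorem exists_eq_of_not_riseFree_erase (hl : l ∈ noRiseLists (m + 2))
    (h : ¬ RiseFree (l.erase (m + 1))) :
    ∃ t x d, l = t ++ x :: (m + 1) :: (x + 1) :: d ∧ x < m := by
  obtain ⟨t, d, rfl, ht, hd⟩ := exists_eq_append_max_cons hl
  obtain ⟨-, hrise_t, hrise_d, -⟩ := (append_cons_mem_noRiseLists_iff hd).1 hl
  rw [erase_append_cons_self ht] at h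
  have hrise : ¬ ∀ a ∈ t.getLast?, ∀ b ∈ d.head?, b ≠ a + 1 := fun h' =>
    h (isChain_append.2 ⟨hrise_t, hrise_d, h'⟩)
  push Not at hrise
  obtain ⟨x, hx, _, hy, rfl⟩ := hrise
  obtain ⟨t, rfl⟩ := getLast?_eq_some_iff.1 hx
  obtain ⟨d, rfl⟩ := head?_eq_some_iff.1 hy
  exact ⟨t, x, d, by simp, by have := hd (x + 1) (mem_cons_self ..); omega⟩

theorem riseFree_map_shiftDown_append_cons (h : RiseFree (t ++ x :: (m + 1) :: (x + 1) :: d))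
    (ht : x ∉ t) (ht' : x + 1 ∉ t) (hd : x ∉ d) (hd' : x + 1 ∉ d) :
    RiseFree ((t ++ x :: d).map (shiftDown x)) := by
  obtain ⟨hrise_t, hrise_tail, hlast, -⟩ := riseFree_append_cons.1 h
  obtain ⟨hhead, hrise_d⟩ := isChain_cons.1 (isChain_cons.1 hrise_tail).2
  rw [map_append, map_cons, shiftDown_self, riseFree_append_cons]
  refine ⟨hrise_t.map_shiftDown ht ht', RiseFree.map_shiftDown hrise_d hd hd', ?_, ?_⟩
  · rw [getLast?_map, Option.forall_mem_map]
    intro a ha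
    have := hlast a ha
    have := ne_of_mem_of_not_mem (mem_of_mem_getLast? ha) ht
    have := ne_of_mem_of_not_mem (mem_of_mem_getLast? ha) ht'
    unfold shiftDown; split_ifs <;> omega
  · rw [head?_map, Option.forall_mem_map]
    intro b hb
    have := hhead b hb
    have := ne_of_mem_of_not_mem (mem_of_mem_head? hb) hd'
    unfold shiftDown; split_ifs <;> omega

theorem riseFree_map_shiftUp_append_cons {s e : List ℕ} (h : RiseFree (s ++ x :: e)) (hx : x < m) :
    RiseFree (s.map (shiftUp x) ++ x :: (m + 1) :: (x + 1) :: e.map (shiftUp x)) := by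
  obtain ⟨hrise_s, hrise_e, hlast, hhead⟩ := riseFree_append_cons.1 h
  rw [riseFree_append_cons]
  refine ⟨hrise_s.map_shiftUp,
    isChain_cons.2 ⟨by simp; omega, isChain_cons.2 ⟨?_, hrise_e.map_shiftUp⟩⟩, ?_, by simp; omega⟩
  · rw [head?_map, Option.forall_mem_map]
    intro b hb
    have := hhead b hb
    unfold shiftUp; split_ifs <;> omega
  · rw [getLast?_map, Option.forall_mem_map]
    intro a ha
    have := hlast a ha
    unfold shiftUp; split_ifs <;> omega

theorem notMem_of_nodup_append_cons {v : ℕ} (h : (t ++ x :: v :: (x + 1) :: d).Nodup) :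
    v ∉ t ∧ x ∉ t ∧ x + 1 ∉ t ∧ x ∉ d ∧ x + 1 ∉ d := by
  simp only [nodup_append, nodup_cons, mem_cons] at h
  grind

theorem not_riseFree_append_cons_succ : ¬ RiseFree (t ++ x :: (x + 1) :: d) := by
  simp [riseFree_append_cons]

theorem map_shiftDown_mem_noRiseLists
    (hl : t ++ x :: (m + 1) :: (x + 1) :: d ∈ noRiseLists (m + 2)) (hx : x < m) :
    (t ++ x :: d).map (shiftDown x) ∈ noRiseLists m := by
  obtain ⟨-, hxt, hxt', hxd, hxd'⟩ := notMem_of_nodup_append_cons (nodup_of_mem_noRiseLists hl)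
  obtain ⟨hperm, hrise⟩ := mem_noRiseLists.1 hl
  refine mem_noRiseLists.2 ⟨(cons_cons_perm_range_iff hx ?_).1
    (append_cons_cons_cons_perm.symm.trans hperm),
    riseFree_map_shiftDown_append_cons hrise hxt hxt' hxd hxd'⟩
  simp [hxt', hxd']

theorem map_shiftUp_append_mem_noRiseLists {s e : List ℕ} (hl : s ++ x :: e ∈ noRiseLists m)
    (hx : x < m) :
    s.map (shiftUp x) ++ x :: (m + 1) :: (x + 1) :: e.map (shiftUp x) ∈ noRiseLists (m + 2) := by
  obtain ⟨hperm, hrise⟩ := mem_noRiseLists.1 hl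
  have hmap : s.map (shiftUp x) ++ x :: e.map (shiftUp x) = (s ++ x :: e).map (shiftUp x) := by
    simp
  refine mem_noRiseLists.2 ⟨append_cons_cons_cons_perm.trans
    ((cons_cons_perm_range_iff hx ?_).2 ?_), riseFree_map_shiftUp_append_cons hrise hx⟩
  · rw [hmap]; simp [shiftUp_ne_succ]
  · rw [hmap, map_map]; simpa [Function.comp_def] using hperm

theorem card_filter_not_riseFree_erase (m : ℕ) :
    ((noRiseLists (m + 2)).filter fun l => ¬ RiseFree (l.erase (m + 1))).card =
      m * (noRiseLists m).card := by
  calc _ = (noRiseLists m ×ˢ Finset.range m).card := by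
        refine Finset.card_nbij' (contract m) (expand m) ?_ ?_ ?_ ?_
        · intro l hl
          obtain ⟨hl, herase⟩ := Finset.mem_filter.1 hl
          obtain ⟨t, x, d, rfl, hx⟩ := exists_eq_of_not_riseFree_erase hl herase
          obtain ⟨hmt, -, hxt', -⟩ := notMem_of_nodup_append_cons (nodup_of_mem_noRiseLists hl)
          rw [Finset.mem_coe, contract_append hx hmt hxt', Finset.mem_product, Finset.mem_range]
          exact ⟨map_shiftDown_mem_noRiseLists hl hx, hx⟩
        · rintro ⟨l, x⟩ hp
          obtain ⟨hl, hx⟩ : l ∈ noRiseLists m ∧ x < m := by simpa using hp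
          obtain ⟨s, e, rfl, hs, he⟩ := exists_eq_append_cons_of_mem_noRiseLists hl hx
          have hexp := map_shiftUp_append_mem_noRiseLists hl hx
          obtain ⟨hms, -⟩ := notMem_of_nodup_append_cons (nodup_of_mem_noRiseLists hexp)
          rw [Finset.mem_coe, expand_append hs he, Finset.mem_filter]
          refine ⟨hexp, ?_⟩
          rw [erase_append_right _ hms, erase_cons_tail (by simp; omega), erase_cons_head]
          exact not_riseFree_append_cons_succ
        · intro l hl
          obtain ⟨hl, herase⟩ := Finset.mem_filter.1 hl
          obtain ⟨t, x, d, rfl, hx⟩ := exists_eq_of_not_riseFree_erase hl herase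
          obtain ⟨hmt, hxt, hxt', hxd, hxd'⟩ :=
            notMem_of_nodup_append_cons (nodup_of_mem_noRiseLists hl)
          rw [contract_append hx hmt hxt', map_append, map_cons, shiftDown_self,
            expand_append (notMem_map_shiftDown hxt hxt') (notMem_map_shiftDown hxd hxd'),
            map_shiftUp_map_shiftDown hxt', map_shiftUp_map_shiftDown hxd']
        · rintro ⟨l, x⟩ hp
          obtain ⟨hl, hx⟩ : l ∈ noRiseLists m ∧ x < m := by simpa using hp
          obtain ⟨s, e, rfl, hs, he⟩ := exists_eq_append_cons_of_mem_noRiseLists hl hx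
          obtain ⟨hms, -, hxs', -⟩ := notMem_of_nodup_append_cons
            (nodup_of_mem_noRiseLists (map_shiftUp_append_mem_noRiseLists hl hx))
          rw [expand_append hs he, contract_append hx hms hxs']
          simp [map_map, Function.comp_def]
    _ = m * (noRiseLists m).card := by rw [Finset.card_product, Finset.card_range, mul_comm]

theorem card_noRiseLists_add_two (m : ℕ) :
    (noRiseLists (m + 2)).card =
      (m + 1) * (noRiseLists (m + 1)).card + m * (noRiseLists m).card := by
  rw [← Finset.card_filter_add_card_filter_not fun l => RiseFree (l.erase (m + 1)),
    card_filter_riseFree_erase, card_filter_not_riseFree_erase]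

theorem ofFn_mem_noRiseLists_iff (π : Equiv.Perm (Fin n)) :
    (ofFn fun k => (π k : ℕ)) ∈ noRiseLists n ↔ π ∈ noRise n := by
  have hperm : (ofFn fun k => (π k : ℕ)) ~ range n := by
    rw [← map_coe_finRange_eq_range, ← ofFn_eq_map]
    exact π.ofFn_comp_perm Fin.val
  rw [mem_noRiseLists, RiseFree, isChain_ofFn, noRise, Finset.mem_filter]
  simp only [hperm, true_and, Finset.mem_univ]
  constructor
  · rintro h ⟨i, hi⟩ ⟨j, hj⟩ (rfl : j = i + 1)
    have := h i hj
    omega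
  · intro h i hi
    have := h ⟨i, by omega⟩ ⟨i + 1, hi⟩ rfl
    omega

theorem card_noRise_eq_card_noRiseLists (n : ℕ) : (noRise n).card = (noRiseLists n).card := by
  refine Finset.card_bij (fun π _ => ofFn fun k => (π k : ℕ))
    (fun π hπ => (ofFn_mem_noRiseLists_iff π).2 hπ) (fun π _ σ _ h => ?_) (fun l hl => ?_)
  · exact Equiv.ext fun k => Fin.val_injective (congrFun (ofFn_inj.1 h) k)
  · obtain rfl := length_of_mem_noRiseLists hl
    have hlt : ∀ k : Fin l.length, l[k] < l.length := fun k =>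
      (mem_iff_lt_of_mem_noRiseLists hl).1 (getElem_mem _)
    have hinj : Function.Injective fun k : Fin l.length => (⟨l[k], hlt k⟩ : Fin l.length) :=
      fun i j h => Fin.ext <| ((nodup_of_mem_noRiseLists hl).getElem_inj_iff).1 (congrArg Fin.val h)
    set π := Equiv.ofBijective _ (Finite.injective_iff_bijective.1 hinj)
    have hπ : (ofFn fun k => (π k : ℕ)) = l := ofFn_getElem
    exact ⟨π, (ofFn_mem_noRiseLists_iff π).1 (by rwa [hπ]), hπ⟩

end NoRise

/-- Proposition 1: for `n ≥ 2`, with `a(n) = a_{1,1}(n)`,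
`a(n) = (n-1)·a(n-1) + (n-2)·a(n-2)`. -/
theorem noRise_recurrence (n : ℕ) (hn : 2 ≤ n) :
    (noRise n).card =
      (n - 1) * (noRise (n - 1)).card + (n - 2) * (noRise (n - 2)).card := by
  obtain ⟨m, rfl⟩ := Nat.exists_eq_add_of_le' hn
  simp only [NoRise.card_noRise_eq_card_noRiseLists, Nat.add_sub_cancel, Nat.add_succ_sub_one]
  exact NoRise.card_noRiseLists_add_two m
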